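/- arXiv:1503.02554 — 2 statements merged into one kernel-verified Lean document; each statement's English description precedes it below -/
import Mathlib

section
/- For each natural number n, there are (up to isomorphism) only finitely many connected multigraphs G with loop number L(G) = |V_1(G)| + |V_2(G)| + b_1(G) at most n. -/
/-- A finite multigraph: loops and multiple edges allowed. Each edge is assigned its
pair of (possibly equal) endpoints. -/
structure Multigraph where
  V : Type
  E : Type
  [fintypeV : Fintype V]
  [decEqV : DecidableEq V]
  [fintypeE : Fintype E]
  ends : E → Sym2 V

attribute [instance] Multigraph.fintypeV Multigraph.decEqV Multigraph.fintypeE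

namespace Multigraph

variable (G : Multigraph)

/-- The degree of a vertex; a loop at `v` contributes `2` to the degree of `v`. -/
def degree (v : G.V) : ℕ :=
  ∑ e : G.E, (if G.ends e = Sym2.diag v then 2 else if v ∈ G.ends e then 1 else 0)

/-- Adjacency: some edge has endpoints `{u, v}`. -/
def Adj (u v : G.V) : Prop := ∃ e : G.E, G.ends e = s(u, v)

/-- A multigraph is connected if it is nonempty and any two vertices are joined by a walk. -/
def Connected : Prop := Nonempty G.V ∧ ∀ u v : G.V, Relation.ReflTransGen G.Adj u v

/-- The first Betti number `b₁(G) = |E| - |V| + 1` of a connected multigraph. -/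
def b1 : ℤ := (Fintype.card G.E : ℤ) - (Fintype.card G.V : ℤ) + 1

/-- The number of vertices of degree `k`. -/
def numDeg (k : ℕ) : ℕ := (Finset.univ.filter (fun v : G.V => G.degree v = k)).card

/-- The Feynman loop number `L(G) = |V₁(G)| + |V₂(G)| + b₁(G)`. -/
def loopNumber : ℤ := (G.numDeg 1 : ℤ) + (G.numDeg 2 : ℤ) + G.b1

end Multigraph

/-- An isomorphism of multigraphs: bijections on vertices and edges preserving endpoints. -/
def Multigraph.Iso (G H : Multigraph) : Prop :=
  ∃ (ev : G.V ≃ H.V) (ee : G.E ≃ H.E), ∀ e : G.E, H.ends (ee e) = Sym2.map ev (G.ends e)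

/-!
A connected multigraph with at least two vertices has no isolated vertex, so every vertex
outside `V₁ ∪ V₂` has degree at least `3`. Together with the handshake lemma this gives
`3|V| ≤ 2|E| + 2|V₁| + |V₂| ≤ 2(L(G) + |V| - 1)`, hence `|V| ≤ 2 L(G) - 2`, and then
`|E| ≤ L(G) + |V| - 1 ≤ 3 L(G)`.
With both counts bounded, relabelling vertices and edges by `Fin` leaves only finitely many
candidates.
-/

open Fintype

namespace Sym2

variable {V : Type} [DecidableEq V]

def incidence (s : Sym2 V) (v : V) : ℕ :=
  if s = Sym2.diag v then 2 else if v ∈ s then 1 else 0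

lemma incidence_mk (a b v : V) :
    incidence s(a, b) v = (if v = a then 1 else 0) + (if v = b then 1 else 0) := by
  by_cases ha : v = a <;> by_cases hb : v = b <;> subst_vars <;>
    simp [incidence, Sym2.diag, Ne.symm, *]

lemma sum_incidence [Fintype V] (s : Sym2 V) : ∑ v, incidence s v = 2 := by
  induction s using Sym2.ind with
  | h a b => simp [incidence_mk, Finset.sum_add_distrib]

lemma one_le_incidence {s : Sym2 V} {v : V} (h : v ∈ s) : 1 ≤ incidence s v := by
  unfold incidence
  split_ifs <;> simp_all

end Sym2

namespace Multigraph

variable (G : Multigraph)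

lemma degree_eq_sum_incidence (v : G.V) : G.degree v = ∑ e, (G.ends e).incidence v := rfl

lemma sum_degree : ∑ v, G.degree v = 2 * card G.E := by
  simp only [degree_eq_sum_incidence]
  rw [Finset.sum_comm]
  simp [Sym2.sum_incidence, mul_comm]

variable {G}

lemma one_le_degree (hG : G.Connected) (hV : 2 ≤ card G.V) (v : G.V) : 1 ≤ G.degree v := by
  obtain ⟨u, hu⟩ := exists_ne_of_one_lt_card hV v
  obtain rfl | ⟨w, ⟨e, he⟩, -⟩ := (hG.2 v u).cases_head
  · exact absurd rfl hu
  calc 1 ≤ (G.ends e).incidence v := Sym2.one_le_incidence (he ▸ Sym2.mem_mk_left v w)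
    _ ≤ G.degree v :=
      Finset.single_le_sum (f := fun e => (G.ends e).incidence v) (fun _ _ => Nat.zero_le _)
        (Finset.mem_univ e)

lemma three_mul_card_le (hdeg : ∀ v, 1 ≤ G.degree v) :
    3 * card G.V ≤ 2 * card G.E + 2 * G.numDeg 1 + G.numDeg 2 := by
  have hv (v : G.V) : 3 ≤ G.degree v + 2 * (if G.degree v = 1 then 1 else 0)
      + (if G.degree v = 2 then 1 else 0) := by
    have := hdeg v
    split_ifs <;> omega
  calc 3 * card G.V = ∑ _v : G.V, 3 := by simp [mul_comm]
    _ ≤ ∑ v, (G.degree v + 2 * (if G.degree v = 1 then 1 else 0)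
        + (if G.degree v = 2 then 1 else 0)) := Finset.sum_le_sum fun v _ => hv v
    _ = 2 * card G.E + 2 * G.numDeg 1 + G.numDeg 2 := by
        simp only [Finset.sum_add_distrib, ← Finset.mul_sum, Finset.sum_boole, sum_degree,
          numDeg, Nat.cast_id]

lemma loopNumber_eq : G.loopNumber = G.numDeg 1 + G.numDeg 2 + card G.E - card G.V + 1 := by
  rw [loopNumber, b1]
  ring

lemma card_V_le_loopNumber (hG : G.Connected) : (card G.V : ℤ) ≤ 2 * G.loopNumber + 1 := by
  rw [loopNumber_eq]
  have hV : 1 ≤ card G.V := card_pos_iff.mpr hG.1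
  rcases (show card G.V = 1 ∨ 2 ≤ card G.V by omega) with h1 | h2
  · omega
  · have := three_mul_card_le (one_le_degree hG h2)
    omega

lemma card_E_le_loopNumber (hG : G.Connected) : (card G.E : ℤ) ≤ 3 * G.loopNumber + 1 := by
  have := card_V_le_loopNumber hG
  rw [loopNumber_eq] at this ⊢
  omega

variable (G)

noncomputable def relabel : Multigraph :=
  ⟨Fin (card G.V), Fin (card G.E), fun i => (G.ends ((equivFin G.E).symm i)).map (equivFin G.V)⟩

lemma iso_relabel : G.Iso G.relabel :=
  ⟨equivFin G.V, equivFin G.E, fun e =>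
    congrArg (Sym2.map _ ∘ G.ends) ((equivFin G.E).symm_apply_apply e)⟩

theorem exists_iso_of_card_le (a b : ℕ) :
    ∃ (k : ℕ) (reps : Fin k → Multigraph), ∀ G : Multigraph,
      card G.V ≤ a → card G.E ≤ b → ∃ i : Fin k, G.Iso (reps i) := by
  let R := Σ (v : Fin (a + 1)) (e : Fin (b + 1)), Fin e → Sym2 (Fin v)
  let toMultigraph (r : R) : Multigraph := ⟨Fin r.1, Fin r.2.1, r.2.2⟩
  refine ⟨card R, toMultigraph ∘ (equivFin R).symm, fun G hV hE => ?_⟩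
  let r : R := ⟨⟨_, Nat.lt_succ_of_le hV⟩, ⟨_, Nat.lt_succ_of_le hE⟩, G.relabel.ends⟩
  refine ⟨equivFin R r, ?_⟩
  rw [Function.comp_apply, Equiv.symm_apply_apply]
  exact G.iso_relabel

end Multigraph

/-- For each `n`, there are only finitely many connected multigraphs with loop number
at most `n`, up to isomorphism. -/
theorem stmt_13 (n : ℕ) :
    ∃ (k : ℕ) (reps : Fin k → Multigraph), ∀ G : Multigraph,
      G.Connected → G.loopNumber ≤ n → ∃ i : Fin k, G.Iso (reps i) := by
  obtain ⟨k, reps, hreps⟩ := Multigraph.exists_iso_of_card_le (2 * n + 1) (3 * n + 1)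
  refine ⟨k, reps, fun G hG hL => hreps G ?_ ?_⟩
  · have := G.card_V_le_loopNumber hG
    omega
  · have := G.card_E_le_loopNumber hG
    omega
end

section
/- A connected multigraph G with loop number L(G) = |V_1(G)| + |V_2(G)| + b_1(G) ≤ n has at most 3n - 3 edges, for n ≥ 2. -/
/-! Every vertex of a connected multigraph with at least one edge has positive degree, so
adding the weight `2` to each vertex of degree `1` and `1` to each vertex of degree `2` makes
every vertex count at least `3`. By the handshake lemma this gives
`3|V| ≤ 2|E| + 2|V₁| + |V₂|`, i.e. `|V| ≤ 2L - 2`; together with `b₁ ≤ L` we get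
`|E| = b₁ + |V| - 1 ≤ 3L - 3`. -/

lemma Sym2.count_toMultiset {α : Type*} [DecidableEq α] (z : Sym2 α) (v : α) :
    z.toMultiset.count v = if z = Sym2.diag v then 2 else if v ∈ z then 1 else 0 := by
  induction z using Sym2.ind with
  | h a b =>
    by_cases hab : a = b
    · subst hab
      by_cases hv : v = a <;> simp [Sym2.toMultiset, Sym2.diag, hv, eq_comm]
    · by_cases hv : v = a <;> by_cases hv' : v = b <;>
        simp_all [Sym2.toMultiset, Sym2.diag, eq_comm]

namespace Multigraph

variable (G : Multigraph)

lemma degree_eq_sum_count (v : G.V) : G.degree v = ∑ e, (G.ends e).toMultiset.count v := by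
  simp only [degree, Sym2.count_toMultiset]

theorem sum_degree_eq_two_mul_card_edges : ∑ v, G.degree v = 2 * Fintype.card G.E := by
  simp only [degree_eq_sum_count]
  rw [Finset.sum_comm]
  simp [Multiset.sum_count_eq_card, Sym2.card_toMultiset, mul_comm]

lemma degree_pos_of_mem_ends {v : G.V} {e : G.E} (h : v ∈ G.ends e) : 0 < G.degree v := by
  rw [degree_eq_sum_count]
  exact Finset.sum_pos' (fun _ _ => Nat.zero_le _)
    ⟨e, Finset.mem_univ e, Multiset.count_pos.mpr (Sym2.mem_toMultiset.mpr h)⟩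

theorem Connected.degree_pos {G : Multigraph} (hG : G.Connected) (e : G.E) (v : G.V) :
    0 < G.degree v := by
  obtain ⟨a, ha⟩ : ∃ a, a ∈ G.ends e := ⟨(G.ends e).out.1, Sym2.out_fst_mem _⟩
  rcases (hG.2 v a).cases_head with rfl | ⟨w, ⟨f, hf⟩, -⟩
  · exact G.degree_pos_of_mem_ends ha
  · exact G.degree_pos_of_mem_ends (hf ▸ Sym2.mem_mk_left v w)

theorem three_mul_card_vertices_le (hpos : ∀ v, 0 < G.degree v) :
    3 * Fintype.card G.V ≤ 2 * Fintype.card G.E + 2 * G.numDeg 1 + G.numDeg 2 := by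
  have hdeg : ∀ v, 3 ≤ G.degree v + 2 * (if G.degree v = 1 then 1 else 0)
      + (if G.degree v = 2 then 1 else 0) := fun v => by
    have := hpos v
    split_ifs <;> omega
  calc 3 * Fintype.card G.V = ∑ _v : G.V, 3 := by simp [mul_comm]
    _ ≤ ∑ v, (G.degree v + 2 * (if G.degree v = 1 then 1 else 0)
          + (if G.degree v = 2 then 1 else 0)) := Finset.sum_le_sum fun v _ => hdeg v
    _ = 2 * Fintype.card G.E + 2 * G.numDeg 1 + G.numDeg 2 := by
      simp only [Finset.sum_add_distrib, ← Finset.mul_sum, sum_degree_eq_two_mul_card_edges,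
        Finset.sum_boole, numDeg, Nat.cast_id]

theorem card_vertices_le_two_mul_loopNumber_sub_two (hpos : ∀ v, 0 < G.degree v) :
    (Fintype.card G.V : ℤ) ≤ 2 * G.loopNumber - 2 := by
  have := G.three_mul_card_vertices_le hpos
  simp only [loopNumber, b1]
  omega

theorem b1_le_loopNumber : G.b1 ≤ G.loopNumber := by
  simp only [loopNumber]
  omega

theorem Connected.card_edges_le_three_mul_loopNumber_sub_three {G : Multigraph}
    (hG : G.Connected) [Nonempty G.E] :
    (Fintype.card G.E : ℤ) ≤ 3 * G.loopNumber - 3 := by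
  have hpos := hG.degree_pos (Classical.arbitrary G.E)
  have hV := G.card_vertices_le_two_mul_loopNumber_sub_two hpos
  have hb := G.b1_le_loopNumber
  simp only [b1] at hb
  omega

end Multigraph

theorem stmt_18_general (n : ℕ) (G : Multigraph) (hconn : G.Connected)
    (hL : G.loopNumber ≤ n) : Fintype.card G.E ≤ 3 * n - 3 := by
  cases isEmpty_or_nonempty G.E
  · simp
  · have := hconn.card_edges_le_three_mul_loopNumber_sub_three
    omega

/-- A connected multigraph with loop number at most `n` (with `n ≥ 2`) has at most
`3n - 3` edges. -/
theorem stmt_18 (n : ℕ) (hn : 2 ≤ n) (G : Multigraph) (hconn : G.Connected)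
    (hL : G.loopNumber ≤ n) : Fintype.card G.E ≤ 3 * n - 3 :=
  stmt_18_general n G hconn hL
end
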